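/- arXiv:2402.05923 — 2 statements merged into one kernel-verified Lean document; each statement's English description precedes it below -/
import Mathlib

section
/- Let u, w : ℝ × ℝ → ℝ be continuously differentiable functions satisfying the incompressibility condition ∂u/∂x(x, z) + ∂w/∂z(x, z) = 0 for all (x, z), and the no-penetration condition w(x, 0) = 0 for all x. Let h : ℝ → ℝ be differentiable at a point x₀. Then the function x ↦ ∫₀^{h(x)} u(x, z) dz is differentiable at x₀ with derivative u(x₀, h(x₀))·h'(x₀) − w(x₀, h(x₀)). -/
/-!
Put `F x y = ∫₀^y u(x, z) dz`. By the fundamental theorem of calculus `∂F/∂y = u`, and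
differentiating under the integral sign, then using incompressibility and `w(x, 0) = 0`,
`∂F/∂x = ∫₀^y ∂u/∂x = -∫₀^y ∂w/∂z = -w(x, y)`. Both partial derivatives are continuous, so `F` is
differentiable and the chain rule along the graph `x ↦ (x, h x)` gives `u h' - w`.
-/

open intervalIntegral Set

section

variable {E : Type*} [NormedAddCommGroup E] [NormedSpace ℝ E] {u : ℝ × ℝ → E}

theorem DifferentiableAt.hasDerivAt_partial_fst {p : ℝ × ℝ} (hu : DifferentiableAt ℝ u p) :
    HasDerivAt (fun x => u (x, p.2)) (fderiv ℝ u p (1, 0)) p.1 :=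
  hu.hasFDerivAt.comp_hasDerivAt p.1 ((hasDerivAt_id p.1).prodMk (hasDerivAt_const p.1 p.2))

theorem DifferentiableAt.hasDerivAt_partial_snd {p : ℝ × ℝ} (hu : DifferentiableAt ℝ u p) :
    HasDerivAt (fun z => u (p.1, z)) (fderiv ℝ u p (0, 1)) p.2 :=
  hu.hasFDerivAt.comp_hasDerivAt p.2 ((hasDerivAt_const p.2 p.1).prodMk (hasDerivAt_id p.2))

theorem ContDiff.continuous_deriv_partial_fst (hu : ContDiff ℝ 1 u) :
    Continuous fun p : ℝ × ℝ => deriv (fun x => u (x, p.2)) p.1 := by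
  simp_rw [fun p => ((hu.differentiable one_ne_zero p).hasDerivAt_partial_fst).deriv]
  exact (hu.continuous_fderiv_apply one_ne_zero).comp (continuous_id.prodMk continuous_const)

theorem ContDiff.continuous_deriv_partial_snd (hu : ContDiff ℝ 1 u) :
    Continuous fun p : ℝ × ℝ => deriv (fun z => u (p.1, z)) p.2 := by
  simp_rw [fun p => ((hu.differentiable one_ne_zero p).hasDerivAt_partial_snd).deriv]
  exact (hu.continuous_fderiv_apply one_ne_zero).comp (continuous_id.prodMk continuous_const)

theorem hasDerivAt_comp_graph_of_continuous_partials {F : ℝ → ℝ → E} {F₁ F₂ : ℝ × ℝ → E}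
    (hF₁ : ∀ p : ℝ × ℝ, HasDerivAt (F · p.2) (F₁ p) p.1)
    (hF₂ : ∀ p : ℝ × ℝ, HasDerivAt (F p.1 ·) (F₂ p) p.2)
    (hc₁ : Continuous F₁) (hc₂ : Continuous F₂) {h : ℝ → ℝ} {h' x₀ : ℝ}
    (hh : HasDerivAt h h' x₀) :
    HasDerivAt (fun x => F x (h x)) (F₁ (x₀, h x₀) + h' • F₂ (x₀, h x₀)) x₀ := by
  have hspan : Continuous fun v : E => ContinuousLinearMap.toSpanSingleton ℝ v :=
    (ContinuousLinearMap.toSpanSingletonCLE (𝕜 := ℝ) (E := E)).continuous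
  have hF : HasFDerivAt (Function.uncurry F)
      ((ContinuousLinearMap.toSpanSingleton ℝ (F₁ (x₀, h x₀))).coprod
        (ContinuousLinearMap.toSpanSingleton ℝ (F₂ (x₀, h x₀)))) (x₀, h x₀) :=
    (hasStrictFDerivAt_uncurry_coprod (u := (x₀, h x₀))
      (f₁ := fun x y => ContinuousLinearMap.toSpanSingleton ℝ (F₁ (x, y)))
      (f₂ := fun x y => ContinuousLinearMap.toSpanSingleton ℝ (F₂ (x, y)))
      (Filter.Eventually.of_forall fun p => (hF₁ p).hasFDerivAt)
      (Filter.Eventually.of_forall fun p => (hF₂ p).hasFDerivAt)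
      (hspan.comp hc₁).continuousAt (hspan.comp hc₂).continuousAt).hasFDerivAt
  refine (hF.comp_hasDerivAt x₀ ((hasDerivAt_id x₀).prodMk hh)).congr_deriv ?_
  simp

theorem ContDiff.hasDerivAt_integral_partial_fst (hu : ContDiff ℝ 1 u) (a b x : ℝ) :
    HasDerivAt (fun x => ∫ z in a..b, u (x, z)) (∫ z in a..b, deriv (fun x' => u (x', z)) x) x := by
  have hu₁ := hu.continuous_deriv_partial_fst
  obtain ⟨M, hM⟩ := ((isCompact_closedBall x 1).prod isCompact_uIcc).exists_bound_of_continuousOn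
    hu₁.continuousOn
  have hslice : ∀ x', Continuous fun z => u (x', z) := fun x' =>
    hu.continuous.comp (continuous_const.prodMk continuous_id)
  refine (hasDerivAt_integral_of_dominated_loc_of_deriv_le (bound := fun _ => M)
    (F' := fun x z => deriv (fun x' => u (x', z)) x) (Metric.ball_mem_nhds x one_pos)
    (Filter.Eventually.of_forall fun x' => (hslice x').aestronglyMeasurable)
    ((hslice x).intervalIntegrable a b)
    (hu₁.comp (continuous_const.prodMk continuous_id)).aestronglyMeasurable
    (Filter.Eventually.of_forall fun z hz x' hx' =>
      hM (x', z) ⟨Metric.ball_subset_closedBall hx', uIoc_subset_uIcc hz⟩)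
    intervalIntegrable_const
    (Filter.Eventually.of_forall fun z _ x' _ =>
      (hu.differentiable one_ne_zero (x', z)).hasDerivAt_partial_fst.differentiableAt.hasDerivAt)).2

end

theorem hasDerivAt_integral_of_incompressible {u w : ℝ × ℝ → ℝ}
    (hu : ContDiff ℝ 1 u) (hw : ContDiff ℝ 1 w)
    (hincomp : ∀ x z : ℝ,
      deriv (fun x' => u (x', z)) x + deriv (fun z' => w (x, z')) z = 0)
    (hnopen : ∀ x : ℝ, w (x, 0) = 0) (x y : ℝ) :
    HasDerivAt (fun x => ∫ z in (0:ℝ)..y, u (x, z)) (-w (x, y)) x := by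
  have hw₂ : Continuous fun z => deriv (fun z' => w (x, z')) z :=
    hw.continuous_deriv_partial_snd.comp (continuous_const.prodMk continuous_id)
  have hflux : ∫ z in (0:ℝ)..y, deriv (fun x' => u (x', z)) x = -w (x, y) :=
    calc ∫ z in (0:ℝ)..y, deriv (fun x' => u (x', z)) x
        = -∫ z in (0:ℝ)..y, deriv (fun z' => w (x, z')) z := by
          rw [← integral_neg]
          exact integral_congr fun z _ => eq_neg_of_add_eq_zero_left (hincomp x z)
      _ = -w (x, y) := by
          rw [integral_deriv_eq_sub (f := fun z' => w (x, z'))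
            (fun z _ =>
              (hw.differentiable one_ne_zero (x, z)).hasDerivAt_partial_snd.differentiableAt)
            (hw₂.intervalIntegrable 0 y), hnopen, sub_zero]
  exact hflux ▸ hu.hasDerivAt_integral_partial_fst 0 y x

theorem stmt_8 (u w : ℝ × ℝ → ℝ) (hu : ContDiff ℝ 1 u) (hw : ContDiff ℝ 1 w)
    (hincomp : ∀ x z : ℝ,
      deriv (fun x' => u (x', z)) x + deriv (fun z' => w (x, z')) z = 0)
    (hnopen : ∀ x : ℝ, w (x, 0) = 0)
    (h : ℝ → ℝ) (x₀ : ℝ) (hh : DifferentiableAt ℝ h x₀) :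
    HasDerivAt (fun x => ∫ z in (0:ℝ)..(h x), u (x, z))
      (u (x₀, h x₀) * deriv h x₀ - w (x₀, h x₀)) x₀ := by
  have hFTC : ∀ p : ℝ × ℝ, HasDerivAt (fun y => ∫ z in (0:ℝ)..y, u (p.1, z)) (u p) p.2 :=
    fun p => ((hu.continuous.comp (continuous_const.prodMk continuous_id)).integral_hasStrictDerivAt
      0 p.2).hasDerivAt
  refine (hasDerivAt_comp_graph_of_continuous_partials
    (F := fun x y => ∫ z in (0:ℝ)..y, u (x, z))
    (fun p => hasDerivAt_integral_of_incompressible hu hw hincomp hnopen p.1 p.2) hFTC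
    hw.continuous.neg hu.continuous hh.hasDerivAt).congr_deriv ?_
  simp only [smul_eq_mul]
  ring
end

section
/- Let α > 0, T > 0, let U : ℝ → ℝ be twice continuously differentiable, and let h, m, s : ℝ × ℝ → ℝ be smooth functions, 1-periodic in x, satisfying the linear constraint ∂h/∂t(t, x) + ∂m/∂x(t, x) − s(t, x) = 0 for all (t, x). Define the dynamic pressure P(t, x) = U'(h(t, x)) − α²·∂²h/∂x²(t, x) and the energy E(t) = ∫₀¹ [ (α²/2)(∂h/∂x(t, x))² + U(h(t, x)) ] dx. Then ∫₀ᵀ ∫₀¹ [ m(t, x)·∂P/∂x(t, x) + s(t, x)·P(t, x) ] dx dt = E(T) − E(0). -/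
open MeasureTheory intervalIntegral Set

/-- Partial derivative in the second (space) variable. -/
noncomputable def pdx (f : ℝ × ℝ → ℝ) : ℝ × ℝ → ℝ := fun p => fderiv ℝ f p (0, 1)

/-- Partial derivative in the first (time) variable. -/
noncomputable def pdt (f : ℝ × ℝ → ℝ) : ℝ × ℝ → ℝ := fun p => fderiv ℝ f p (1, 0)

lemma hasDerivAt_pdx (f : ℝ × ℝ → ℝ) {t x : ℝ} (hf : DifferentiableAt ℝ f (t, x)) :
    HasDerivAt (fun x' => f (t, x')) (pdx f (t, x)) x := by
  have h1 : HasDerivAt (fun x' : ℝ => ((t, x') : ℝ × ℝ)) ((0, 1) : ℝ × ℝ) x :=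
    (hasDerivAt_const x t).prodMk (hasDerivAt_id x)
  exact hf.hasFDerivAt.comp_hasDerivAt x h1

lemma hasDerivAt_pdt (f : ℝ × ℝ → ℝ) {t x : ℝ} (hf : DifferentiableAt ℝ f (t, x)) :
    HasDerivAt (fun t' => f (t', x)) (pdt f (t, x)) t := by
  have h1 : HasDerivAt (fun t' : ℝ => ((t', x) : ℝ × ℝ)) ((1, 0) : ℝ × ℝ) t :=
    (hasDerivAt_id t).prodMk (hasDerivAt_const t x)
  exact hf.hasFDerivAt.comp_hasDerivAt t h1

lemma contDiff_pdx {f : ℝ × ℝ → ℝ} (hf : ContDiff ℝ (⊤ : ℕ∞) f) : ContDiff ℝ (⊤ : ℕ∞) (pdx f) :=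
  (hf.fderiv_right (by simp)).clm_apply contDiff_const

lemma contDiff_pdt {f : ℝ × ℝ → ℝ} (hf : ContDiff ℝ (⊤ : ℕ∞) f) : ContDiff ℝ (⊤ : ℕ∞) (pdt f) :=
  (hf.fderiv_right (by simp)).clm_apply contDiff_const

lemma clairaut_pd {f : ℝ × ℝ → ℝ} (hf : ContDiff ℝ (⊤ : ℕ∞) f) (p : ℝ × ℝ) :
    pdx (pdt f) p = pdt (pdx f) p := by
  have hd : Differentiable ℝ (fderiv ℝ f) := (hf.fderiv_right (m := (⊤ : ℕ∞)) (by simp)).differentiable (by simp)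
  have e1 : fderiv ℝ (fun q => fderiv ℝ f q ((1:ℝ), (0:ℝ))) p
      = (fderiv ℝ f p).comp (fderiv ℝ (fun _ : ℝ × ℝ => ((1:ℝ), (0:ℝ))) p)
        + (fderiv ℝ (fderiv ℝ f) p).flip ((1:ℝ), (0:ℝ)) :=
    fderiv_clm_apply (hd p) (differentiableAt_const _)
  have e2 : fderiv ℝ (fun q => fderiv ℝ f q ((0:ℝ), (1:ℝ))) p
      = (fderiv ℝ f p).comp (fderiv ℝ (fun _ : ℝ × ℝ => ((0:ℝ), (1:ℝ))) p)
        + (fderiv ℝ (fderiv ℝ f) p).flip ((0:ℝ), (1:ℝ)) :=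
    fderiv_clm_apply (hd p) (differentiableAt_const _)
  have hsym := second_derivative_symmetric
    (fun y => ((hf.differentiable (by simp)) y).hasFDerivAt)
    ((hd p).hasFDerivAt) ((0:ℝ), (1:ℝ)) ((1:ℝ), (0:ℝ))
  show fderiv ℝ (fun q => fderiv ℝ f q (1, 0)) p (0, 1)
      = fderiv ℝ (fun q => fderiv ℝ f q (0, 1)) p (1, 0)
  simp only [e1, e2, fderiv_const, Pi.zero_apply, ContinuousLinearMap.comp_zero,
    ContinuousLinearMap.add_apply, ContinuousLinearMap.zero_apply, zero_add,
    ContinuousLinearMap.flip_apply, fderiv_const_apply]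
  exact hsym

lemma periodic_deriv' (g : ℝ → ℝ) (hg : ∀ x, g (x + 1) = g x) (x : ℝ) :
    deriv g (x + 1) = deriv g x := by
  have : (fun y => g (y + 1)) = g := funext hg
  rw [← deriv_comp_add_const, this]

lemma periodic_pdx {f : ℝ × ℝ → ℝ} (hf : ContDiff ℝ (⊤ : ℕ∞) f)
    (hper : ∀ t x : ℝ, f (t, x + 1) = f (t, x)) (t x : ℝ) :
    pdx f (t, x + 1) = pdx f (t, x) := by
  have e : ∀ y : ℝ, deriv (fun x' => f (t, x')) y = pdx f (t, y) := fun y =>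
    (hasDerivAt_pdx f (hf.differentiable (by simp) (t, y))).deriv
  rw [← e, ← e x, periodic_deriv' _ (fun y => hper t y)]

lemma periodic_pdt {f : ℝ × ℝ → ℝ} (hf : ContDiff ℝ (⊤ : ℕ∞) f)
    (hper : ∀ t x : ℝ, f (t, x + 1) = f (t, x)) (t x : ℝ) :
    pdt f (t, x + 1) = pdt f (t, x) := by
  have e1 : ∀ y t' : ℝ, deriv (fun t'' => f (t'', y)) t' = pdt f (t', y) := fun y t' =>
    (hasDerivAt_pdt f (hf.differentiable (by simp) (t', y))).deriv
  rw [← e1, ← e1 x t]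
  congr 1
  exact funext fun t' => hper t' x

theorem stmt_14 (α T : ℝ) (hα : 0 < α) (hT : 0 < T)
    (U : ℝ → ℝ) (hU : ContDiff ℝ 2 U)
    (h m s : ℝ × ℝ → ℝ)
    (hh : ContDiff ℝ (⊤ : ℕ∞) h) (hm : ContDiff ℝ (⊤ : ℕ∞) m) (hs : ContDiff ℝ (⊤ : ℕ∞) s)
    (hhper : ∀ t x : ℝ, h (t, x + 1) = h (t, x))
    (hmper : ∀ t x : ℝ, m (t, x + 1) = m (t, x))
    (hsper : ∀ t x : ℝ, s (t, x + 1) = s (t, x))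
    (hcons : ∀ t x : ℝ,
      deriv (fun t' => h (t', x)) t + deriv (fun x' => m (t, x')) x - s (t, x) = 0)
    (P : ℝ × ℝ → ℝ)
    (hP : ∀ t x : ℝ, P (t, x) =
      deriv U (h (t, x)) - α ^ 2 * deriv (fun y => deriv (fun z => h (t, z)) y) x)
    (E : ℝ → ℝ)
    (hE : ∀ t : ℝ, E t = ∫ x in (0:ℝ)..1,
      ((α ^ 2 / 2) * (deriv (fun x' => h (t, x')) x) ^ 2 + U (h (t, x)))) :
    (∫ t in (0:ℝ)..T, ∫ x in (0:ℝ)..1,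
      (m (t, x) * deriv (fun y => P (t, y)) x + s (t, x) * P (t, x))) = E T - E 0 := by
  -- Basic differentiability / continuity facts
  have hdh : Differentiable ℝ h := hh.differentiable (by simp)
  have chx : ContDiff ℝ (⊤ : ℕ∞) (pdx h) := contDiff_pdx hh
  have cht : ContDiff ℝ (⊤ : ℕ∞) (pdt h) := contDiff_pdt hh
  have chxx : ContDiff ℝ (⊤ : ℕ∞) (pdx (pdx h)) := contDiff_pdx chx
  have chtx : ContDiff ℝ (⊤ : ℕ∞) (pdx (pdt h)) := contDiff_pdx cht
  have chxt : ContDiff ℝ (⊤ : ℕ∞) (pdt (pdx h)) := contDiff_pdt chx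
  have cmx : ContDiff ℝ (⊤ : ℕ∞) (pdx m) := contDiff_pdx hm
  have hU1 : ContDiff ℝ 1 (deriv U) := by
    have h2 : ContDiff ℝ ((1 : WithTop ℕ∞) + 1) U := by norm_num; exact hU
    exact (contDiff_succ_iff_deriv.mp h2).2.2
  -- the pressure as a two-variable function
  set Pf : ℝ × ℝ → ℝ := fun p => deriv U (h p) - α ^ 2 * pdx (pdx h) p with hPfdef
  have cPf : ContDiff ℝ 1 Pf :=
    (hU1.comp (hh.of_le (by simp))).sub (contDiff_const.mul (chxx.of_le (by simp)))
  have dPf : Differentiable ℝ Pf := cPf.differentiable one_ne_zero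
  have cPx : Continuous (pdx Pf) := by
    have : ContDiff ℝ 0 (fderiv ℝ Pf) := cPf.fderiv_right (by norm_num)
    exact (this.clm_apply contDiff_const).continuous
  -- energy density and its time derivative
  set ee : ℝ × ℝ → ℝ := fun p => α ^ 2 / 2 * (pdx h p) ^ 2 + U (h p) with heedef
  set eet : ℝ × ℝ → ℝ := fun p =>
    α ^ 2 * pdx h p * pdt (pdx h) p + deriv U (h p) * pdt h p with heetdef
  have ceet : Continuous eet := by
    apply Continuous.add
    · exact ((continuous_const.mul chx.continuous).mul chxt.continuous)
    · exact (hU1.continuous.comp hdh.continuous).mul cht.continuous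
  -- the "flux" whose x-derivative integrates to zero
  set G2 : ℝ × ℝ → ℝ := fun p =>
    m p * pdx Pf p + pdx m p * Pf p
      - α ^ 2 * (pdx (pdt h) p * pdx h p + pdt h p * pdx (pdx h) p) with hG2def
  have cG2 : Continuous G2 := by
    apply Continuous.sub
    · exact ((hm.continuous.mul cPx).add (cmx.continuous.mul (cPf.continuous)))
    · exact continuous_const.mul
        ((chtx.continuous.mul chx.continuous).add (cht.continuous.mul chxx.continuous))
  -- Step 1: identify the integrand
  have key1 : ∀ t x : ℝ,
      m (t, x) * deriv (fun y => P (t, y)) x + s (t, x) * P (t, x)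
        = G2 (t, x) + eet (t, x) := by
    intro t x
    -- P coincides with Pf
    have hPeq : ∀ t' x' : ℝ, P (t', x') = Pf (t', x') := by
      intro t' x'
      have e1 : (deriv fun z => h (t', z)) = fun z => pdx h (t', z) :=
        funext fun z => (hasDerivAt_pdx h (hdh (t', z))).deriv
      have e2 : deriv (fun y => pdx h (t', y)) x' = pdx (pdx h) (t', x') :=
        (hasDerivAt_pdx (pdx h) (chx.differentiable (by simp) (t', x'))).deriv
      rw [hP, hPfdef]
      simp only [e1, e2]
    have ederP : deriv (fun y => P (t, y)) x = pdx Pf (t, x) := by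
      have : (fun y => P (t, y)) = fun y => Pf (t, y) := funext fun y => hPeq t y
      rw [this]
      exact (hasDerivAt_pdx Pf (dPf (t, x))).deriv
    -- constraint
    have ht' : deriv (fun t' => h (t', x)) t = pdt h (t, x) :=
      (hasDerivAt_pdt h (hdh (t, x))).deriv
    have hm' : deriv (fun x' => m (t, x')) x = pdx m (t, x) :=
      (hasDerivAt_pdx m (hm.differentiable (by simp) (t, x))).deriv
    have hsval : s (t, x) = pdt h (t, x) + pdx m (t, x) := by
      have := hcons t x; rw [ht', hm'] at this; linarith
    have hcl : pdx (pdt h) (t, x) = pdt (pdx h) (t, x) := clairaut_pd hh (t, x)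
    rw [ederP, hPeq, hsval, hG2def, heetdef, hPfdef]
    simp only
    rw [hcl]
    ring
  -- Step 2: ∫₀¹ G2 (t, x) dx = 0 by FTC and periodicity
  have key2 : ∀ t : ℝ, (∫ x in (0:ℝ)..1, G2 (t, x)) = 0 := by
    intro t
    have hFTC : (∫ x in (0:ℝ)..1, G2 (t, x))
        = (m (t, 1) * Pf (t, 1) - α ^ 2 * (pdt h (t, 1) * pdx h (t, 1)))
          - (m (t, 0) * Pf (t, 0) - α ^ 2 * (pdt h (t, 0) * pdx h (t, 0))) := by
      apply intervalIntegral.integral_eq_sub_of_hasDerivAt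
        (f := fun x => m (t, x) * Pf (t, x) - α ^ 2 * (pdt h (t, x) * pdx h (t, x)))
        (f' := fun x => G2 (t, x))
      · intro x _
        have hm' : HasDerivAt (fun x' => m (t, x')) (pdx m (t, x)) x :=
          hasDerivAt_pdx m (hm.differentiable (by simp) (t, x))
        have hPf' : HasDerivAt (fun x' => Pf (t, x')) (pdx Pf (t, x)) x :=
          hasDerivAt_pdx Pf (dPf (t, x))
        have hht' : HasDerivAt (fun x' => pdt h (t, x')) (pdx (pdt h) (t, x)) x :=
          hasDerivAt_pdx (pdt h) (cht.differentiable (by simp) (t, x))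
        have hhx' : HasDerivAt (fun x' => pdx h (t, x')) (pdx (pdx h) (t, x)) x :=
          hasDerivAt_pdx (pdx h) (chx.differentiable (by simp) (t, x))
        have := (hm'.mul hPf').sub (((hht'.mul hhx')).const_mul (α ^ 2))
        convert this using 1
        · rfl
        simp only [hG2def]; ring
      · exact (cG2.comp (Continuous.prodMk_right t)).intervalIntegrable 0 1
    rw [hFTC]
    have h01 : (1 : ℝ) = 0 + 1 := by norm_num
    have pm : m (t, 1) = m (t, 0) := by rw [h01]; exact hmper t 0
    have pht : pdt h (t, 1) = pdt h (t, 0) := by rw [h01]; exact periodic_pdt hh hhper t 0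
    have phx : pdx h (t, 1) = pdx h (t, 0) := by rw [h01]; exact periodic_pdx hh hhper t 0
    have phxx : pdx (pdx h) (t, 1) = pdx (pdx h) (t, 0) := by
      rw [h01]; exact periodic_pdx chx (periodic_pdx hh hhper) t 0
    have ph : h (t, 1) = h (t, 0) := by rw [h01]; exact hhper t 0
    have pPf : Pf (t, 1) = Pf (t, 0) := by rw [hPfdef]; simp only; rw [ph, phxx]
    rw [pm, pht, phx, pPf]; ring
  -- Step 3: FTC in time for the energy density
  have key3 : ∀ x : ℝ, (∫ t in (0:ℝ)..T, eet (t, x)) = ee (T, x) - ee (0, x) := by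
    intro x
    apply intervalIntegral.integral_eq_sub_of_hasDerivAt
      (f := fun t => ee (t, x)) (f' := fun t => eet (t, x))
    · intro t _
      have hhx' : HasDerivAt (fun t' => pdx h (t', x)) (pdt (pdx h) (t, x)) t :=
        hasDerivAt_pdt (pdx h) (chx.differentiable (by simp) (t, x))
      have hht : HasDerivAt (fun t' => h (t', x)) (pdt h (t, x)) t :=
        hasDerivAt_pdt h (hdh (t, x))
      have hUc : HasDerivAt U (deriv U (h (t, x))) (h (t, x)) :=
        ((hU.differentiable two_ne_zero) (h (t, x))).hasDerivAt
      have := ((hhx'.pow 2).const_mul (α ^ 2 / 2)).add (hUc.comp t hht)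
      convert this using 1
      · rfl
      rw [heetdef]; simp only [Function.comp]; ring
    · exact ((ceet.comp (continuous_id.prodMk continuous_const)).intervalIntegrable 0 T)
  -- Step 4: E t is the integral of ee
  have keyE : ∀ t : ℝ, E t = ∫ x in (0:ℝ)..1, ee (t, x) := by
    intro t
    rw [hE]
    have e1 : ∀ x : ℝ, deriv (fun x' => h (t, x')) x = pdx h (t, x) := fun x =>
      (hasDerivAt_pdx h (hdh (t, x))).deriv
    simp only [e1, heedef]
  -- integrability facts for splitting integrals
  have intG : ∀ t : ℝ, IntervalIntegrable (fun x => G2 (t, x)) volume 0 1 := fun t =>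
    (cG2.comp (Continuous.prodMk_right t)).intervalIntegrable 0 1
  have inteet : ∀ t : ℝ, IntervalIntegrable (fun x => eet (t, x)) volume 0 1 := fun t =>
    (ceet.comp (Continuous.prodMk_right t)).intervalIntegrable 0 1
  -- assemble
  calc (∫ t in (0:ℝ)..T, ∫ x in (0:ℝ)..1,
        (m (t, x) * deriv (fun y => P (t, y)) x + s (t, x) * P (t, x)))
      = ∫ t in (0:ℝ)..T, ∫ x in (0:ℝ)..1, (G2 (t, x) + eet (t, x)) := by
        simp only [key1]
    _ = ∫ t in (0:ℝ)..T, ((∫ x in (0:ℝ)..1, G2 (t, x)) + ∫ x in (0:ℝ)..1, eet (t, x)) := by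
        have : ∀ t : ℝ, (∫ x in (0:ℝ)..1, (G2 (t, x) + eet (t, x)))
            = (∫ x in (0:ℝ)..1, G2 (t, x)) + ∫ x in (0:ℝ)..1, eet (t, x) := fun t =>
          intervalIntegral.integral_add (intG t) (inteet t)
        simp only [this]
    _ = ∫ t in (0:ℝ)..T, ∫ x in (0:ℝ)..1, eet (t, x) := by
        simp only [key2, zero_add]
    _ = ∫ x in (0:ℝ)..1, ∫ t in (0:ℝ)..T, eet (t, x) := by
        rw [intervalIntegral.integral_of_le hT.le, intervalIntegral.integral_of_le zero_le_one]
        simp_rw [intervalIntegral.integral_of_le hT.le,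
          intervalIntegral.integral_of_le zero_le_one]
        apply MeasureTheory.integral_integral_swap
        rw [Function.uncurry_def, Measure.prod_restrict]
        have : IntegrableOn (fun p : ℝ × ℝ => eet (p.1, p.2))
            (Icc (0:ℝ) T ×ˢ Icc (0:ℝ) 1) volume :=
          ContinuousOn.integrableOn_compact' (isCompact_Icc.prod isCompact_Icc)
            (measurableSet_Icc.prod measurableSet_Icc) (by fun_prop)
        exact this.mono_set (Set.prod_mono Ioc_subset_Icc_self Ioc_subset_Icc_self)
    _ = ∫ x in (0:ℝ)..1, (ee (T, x) - ee (0, x)) := by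
        simp only [key3]
    _ = (∫ x in (0:ℝ)..1, ee (T, x)) - ∫ x in (0:ℝ)..1, ee (0, x) := by
        apply intervalIntegral.integral_sub
        · exact ((show Continuous ee from heedef ▸ ((continuous_const.mul (chx.continuous.pow 2)).add
            (hU.continuous.comp hdh.continuous))).comp (Continuous.prodMk_right T)).intervalIntegrable 0 1
        · exact ((show Continuous ee from heedef ▸ ((continuous_const.mul (chx.continuous.pow 2)).add
            (hU.continuous.comp hdh.continuous))).comp (Continuous.prodMk_right 0)).intervalIntegrable 0 1
    _ = E T - E 0 := by rw [keyE, keyE]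
end
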